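/- For k-dimensional subspaces x, y of V with 1 < i < k where i = k - dim(x ∩ y), the following inner products hold: ⟨x̂, (x∩y)^⟩ = q^k [k-i][n-k], ⟨x̂, (x+y)^⟩ = q^{k+i}[k][n-k-i], ‖(x∩y)^‖² = q^{k-i}[k-i][n-k+i], ‖(x+y)^‖² = q^{k+i}[k+i][n-k-i], and ⟨(x∩y)^, (x+y)^⟩ = q^{k+i}[k-i][n-k-i]. -/

import Mathlib

/-- The Gaussian number `[m] = (q^m - 1)/(q - 1)` as a real number. -/
noncomputable def gaussR (q m : ℕ) : ℝ := ((q : ℝ) ^ m - 1) / ((q : ℝ) - 1)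

/-- The vector `û ∈ E` attached to a subspace `u`: the sum of `ŝ` over all
one-dimensional subspaces `s ⊆ u`. -/
noncomputable def uhat {F V : Type*} [Field F] [AddCommGroup V] [Module F V]
    {E : Type*} [NormedAddCommGroup E] [InnerProductSpace ℝ E]
    (shat : {s : Submodule F V // Module.finrank F s = 1} → E)
    (u : Submodule F V) : E :=
  ∑ᶠ (s : {s : Submodule F V // Module.finrank F s = 1}) (_ : s.1 ≤ u), shat s

/-
The lines of `V` inside a subspace `u` are the points of the projective space of `u`, so there
are `[dim u]` of them. Since `⟨ŝ, t̂⟩ = [n]·δ(s,t) - 1`, for `u ≤ w` every line `s ⊆ u`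
satisfies `⟨ŝ, ŵ⟩ = [n] - [dim w]`, whence
`⟨û, ŵ⟩ = [dim u]([n] - [dim w]) = q^(dim w)[dim u][n - dim w]`.
All five identities are instances of this, with `dim (x ⊓ y) = k - i` and `dim (x ⊔ y) = k + i`.
-/

open Module

lemma gaussR_eq_geom_sum {q : ℕ} (hq : q ≠ 1) (m : ℕ) :
    gaussR q m = ∑ j ∈ Finset.range m, (q : ℝ) ^ j :=
  (geom_sum_eq (by exact_mod_cast hq) m).symm

lemma gaussR_sub_gaussR (q : ℕ) {a b : ℕ} (hab : b ≤ a) :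
    gaussR q a - gaussR q b = (q : ℝ) ^ b * gaussR q (a - b) := by
  obtain ⟨c, rfl⟩ := Nat.exists_eq_add_of_le hab
  simp only [gaussR, Nat.add_sub_cancel_left, pow_add]
  ring

lemma inner_sum_sum_of_subset {ι E : Type*} [NormedAddCommGroup E] [InnerProductSpace ℝ E]
    (v : ι → E) {N : ℝ} (hnorm : ∀ s, ‖v s‖ ^ 2 = N - 1)
    (hinner : ∀ s t, s ≠ t → (inner ℝ (v s) (v t) : ℝ) = -1)
    {A B : Finset ι} (hAB : A ⊆ B) :
    (inner ℝ (∑ s ∈ A, v s) (∑ t ∈ B, v t) : ℝ) = A.card * (N - B.card) := by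
  classical
  have hvv : ∀ s t, (inner ℝ (v s) (v t) : ℝ) = (if s = t then N else 0) - 1 := by
    intro s t
    split_ifs with hst
    · rw [hst, real_inner_self_eq_norm_sq, hnorm]
    · rw [hinner s t hst, zero_sub]
  have hrow : ∀ s ∈ A, (inner ℝ (v s) (∑ t ∈ B, v t) : ℝ) = N - B.card := by
    intro s hs
    simp only [inner_sum, hvv, Finset.sum_sub_distrib, Finset.sum_ite_eq, if_pos (hAB hs),
      Finset.sum_const, nsmul_eq_mul, mul_one]
  rw [sum_inner, Finset.sum_congr rfl hrow, Finset.sum_const, nsmul_eq_mul]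

section Lines

variable {F V : Type*} [Field F] [AddCommGroup V] [Module F V]

def linesLeEquiv (u : Submodule F V) :
    {s : {s : Submodule F V // finrank F s = 1} | s.1 ≤ u} ≃
      {t : Submodule F u // finrank F t = 1} where
  toFun s := ⟨s.1.1.comap u.subtype, by
    rw [← Submodule.finrank_map_subtype_eq, Submodule.map_comap_subtype, inf_eq_right.2 s.2,
      s.1.2]⟩
  invFun t := ⟨⟨t.1.map u.subtype, by rw [Submodule.finrank_map_subtype_eq, t.2]⟩,
    Submodule.map_subtype_le u t.1⟩
  left_inv s := by
    ext1; ext1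
    exact (Submodule.map_comap_subtype u s.1.1).trans (inf_eq_right.2 s.2)
  right_inv t := by
    ext1
    exact Submodule.comap_map_eq_of_injective u.injective_subtype t.1

variable [Fintype F] [FiniteDimensional F V]

instance : Finite {s : Submodule F V // finrank F s = 1} :=
  haveI : Finite V := Module.finite_of_finite F
  haveI : Finite (Submodule F V) := Finite.of_injective _ SetLike.coe_injective
  inferInstance

noncomputable def linesIn (u : Submodule F V) : Finset {s : Submodule F V // finrank F s = 1} :=
  (Set.toFinite {s | s.1 ≤ u}).toFinset

lemma mem_linesIn {u : Submodule F V} {s : {s : Submodule F V // finrank F s = 1}} :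
    s ∈ linesIn u ↔ s.1 ≤ u :=
  Set.Finite.mem_toFinset _

lemma linesIn_mono {u w : Submodule F V} (huw : u ≤ w) : linesIn u ⊆ linesIn w :=
  fun _ hs => mem_linesIn.2 ((mem_linesIn.1 hs).trans huw)

lemma card_linesIn {q : ℕ} (hq : Fintype.card F = q) (u : Submodule F V) :
    ((linesIn u).card : ℝ) = gaussR q (finrank F u) := by
  have hq1 : q ≠ 1 := by
    have := Fintype.one_lt_card (α := F)
    omega
  rw [linesIn, ← Set.ncard_eq_toFinset_card, ← Nat.card_coe_set_eq,
    Nat.card_congr ((linesLeEquiv u).trans (Projectivization.equivSubmodule F u).symm),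
    Projectivization.card_of_finrank F u rfl, Nat.card_eq_fintype_card, hq,
    gaussR_eq_geom_sum hq1]
  norm_cast

lemma uhat_eq_sum_linesIn {E : Type*} [NormedAddCommGroup E] [InnerProductSpace ℝ E]
    (shat : {s : Submodule F V // finrank F s = 1} → E) (u : Submodule F V) :
    uhat shat u = ∑ s ∈ linesIn u, shat s :=
  finsum_mem_eq_finite_toFinset_sum shat _

lemma inner_uhat_of_le {q : ℕ} (hq : Fintype.card F = q)
    {E : Type*} [NormedAddCommGroup E] [InnerProductSpace ℝ E]
    (shat : {s : Submodule F V // finrank F s = 1} → E)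
    (hnorm : ∀ s, ‖shat s‖ ^ 2 = gaussR q (finrank F V) - 1)
    (hinner : ∀ s t, s ≠ t → (inner ℝ (shat s) (shat t) : ℝ) = -1)
    {u w : Submodule F V} (huw : u ≤ w) :
    (inner ℝ (uhat shat u) (uhat shat w) : ℝ)
      = (q : ℝ) ^ finrank F w * gaussR q (finrank F u)
          * gaussR q (finrank F V - finrank F w) := by
  rw [uhat_eq_sum_linesIn, uhat_eq_sum_linesIn,
    inner_sum_sum_of_subset shat hnorm hinner (linesIn_mono huw), card_linesIn hq,
    card_linesIn hq, gaussR_sub_gaussR q (Submodule.finrank_le w)]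
  ring

end Lines

theorem stmt12_general {F V : Type*} [Field F] [Fintype F] [AddCommGroup V] [Module F V]
    [FiniteDimensional F V] {q n k : ℕ} (hq : Fintype.card F = q)
    (hn : Module.finrank F V = n)
    {E : Type*} [NormedAddCommGroup E] [InnerProductSpace ℝ E]
    (shat : {s : Submodule F V // Module.finrank F s = 1} → E)
    (hnorm : ∀ s, ‖shat s‖ ^ 2 = gaussR q n - 1)
    (hinner : ∀ s t, s ≠ t → (inner ℝ (shat s) (shat t) : ℝ) = -1)
    (x y : Submodule F V) {i : ℕ} (hik : i < k)
    (hx : Module.finrank F x = k) (hy : Module.finrank F y = k)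
    (hxy : Module.finrank F (x ⊓ y : Submodule F V) = k - i) :
    (inner ℝ (uhat shat x) (uhat shat (x ⊓ y)) : ℝ)
        = (q : ℝ) ^ k * gaussR q (k - i) * gaussR q (n - k) ∧
    (inner ℝ (uhat shat x) (uhat shat (x ⊔ y)) : ℝ)
        = (q : ℝ) ^ (k + i) * gaussR q k * gaussR q (n - k - i) ∧
    ‖uhat shat (x ⊓ y)‖ ^ 2
        = (q : ℝ) ^ (k - i) * gaussR q (k - i) * gaussR q (n - k + i) ∧
    ‖uhat shat (x ⊔ y)‖ ^ 2
        = (q : ℝ) ^ (k + i) * gaussR q (k + i) * gaussR q (n - k - i) ∧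
    (inner ℝ (uhat shat (x ⊓ y)) (uhat shat (x ⊔ y)) : ℝ)
        = (q : ℝ) ^ (k + i) * gaussR q (k - i) * gaussR q (n - k - i) := by
  subst hn
  have hsup : finrank F (x ⊔ y : Submodule F V) = k + i := by
    have := Submodule.finrank_sup_add_finrank_inf_eq x y
    omega
  have hkn : k ≤ finrank F V := hx ▸ Submodule.finrank_le x
  have key {u w : Submodule F V} (huw : u ≤ w) := inner_uhat_of_le hq shat hnorm hinner huw
  refine ⟨?_, ?_, ?_, ?_, ?_⟩
  · rw [real_inner_comm, key inf_le_left, hxy, hx]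
  · rw [key le_sup_left, hx, hsup, Nat.sub_sub]
  · rw [← real_inner_self_eq_norm_sq, key le_rfl, hxy, Nat.sub_sub_right _ hik.le,
      Nat.sub_add_comm hkn]
  · rw [← real_inner_self_eq_norm_sq, key le_rfl, hsup, Nat.sub_sub]
  · rw [key (inf_le_left.trans le_sup_left), hxy, hsup, Nat.sub_sub]

theorem stmt12 {F V : Type*} [Field F] [Fintype F] [AddCommGroup V] [Module F V]
    [FiniteDimensional F V] {q n k : ℕ} (hq : Fintype.card F = q)
    (hn : Module.finrank F V = n) (hnk : n > 2 * k) (hk : 2 * k ≥ 6)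
    {E : Type*} [NormedAddCommGroup E] [InnerProductSpace ℝ E]
    (shat : {s : Submodule F V // Module.finrank F s = 1} → E)
    (hspan : Submodule.span ℝ (Set.range shat) = ⊤)
    (hnorm : ∀ s, ‖shat s‖ ^ 2 = gaussR q n - 1)
    (hinner : ∀ s t, s ≠ t → (inner ℝ (shat s) (shat t) : ℝ) = -1)
    (hsum : ∑ᶠ s, shat s = 0)
    (x y : Submodule F V) {i : ℕ} (hi1 : 1 < i) (hik : i < k)
    (hx : Module.finrank F x = k) (hy : Module.finrank F y = k)
    (hxy : Module.finrank F (x ⊓ y : Submodule F V) = k - i) :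
    (inner ℝ (uhat shat x) (uhat shat (x ⊓ y)) : ℝ)
        = (q : ℝ) ^ k * gaussR q (k - i) * gaussR q (n - k) ∧
    (inner ℝ (uhat shat x) (uhat shat (x ⊔ y)) : ℝ)
        = (q : ℝ) ^ (k + i) * gaussR q k * gaussR q (n - k - i) ∧
    ‖uhat shat (x ⊓ y)‖ ^ 2
        = (q : ℝ) ^ (k - i) * gaussR q (k - i) * gaussR q (n - k + i) ∧
    ‖uhat shat (x ⊔ y)‖ ^ 2
        = (q : ℝ) ^ (k + i) * gaussR q (k + i) * gaussR q (n - k - i) ∧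
    (inner ℝ (uhat shat (x ⊓ y)) (uhat shat (x ⊔ y)) : ℝ)
        = (q : ℝ) ^ (k + i) * gaussR q (k - i) * gaussR q (n - k - i) :=
  stmt12_general hq hn shat hnorm hinner x y hik hx hy hxy
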